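/- Let d = 4, ℓ = 5/3, γ > ℓ^{-1/2}, and let U(ξ) = Σ_{i≥0} U_i·ξ^i be a formal power series with real coefficients satisfying U₀ = ε, U₁ = (λ₋ − c₄)/c₂, and the formal power series identity Δ_Y(ξ, U(ξ))·U′(ξ) = Δ_U(ξ, U(ξ)). Then for every n ≥ 2: (n·λ₋ − λ₊)·U_n = [ξⁿ]Δ_U(ξ, T_{n−1}(ξ)) − Σ_{i=2}^{n} (n+1−i)·U_{n+1−i}·[ξⁱ]Δ_Y(ξ, T_{n−1}(ξ)), where T_{n−1}(ξ) = Σ_{i=0}^{n−1} U_i·ξ^i; in particular the right-hand side does not involve U_n. Moreover [ξⁿ]Δ_U(ξ, T_n(ξ)) = [ξⁿ]Δ_U(ξ, T_{n−1}(ξ)) + c₁·U_n and [ξⁿ]Δ_Y(ξ, T_n(ξ)) = [ξⁿ]Δ_Y(ξ, T_{n−1}(ξ)) + c₂·U_n. -/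

import Mathlib

noncomputable section

open Polynomial

namespace Stmt7

def epsP (γ : ℝ) : ℝ := (5/3) * γ ^ 2 - 1

def Aval (γ : ℝ) : ℝ := 4 + 1 - (4 - 1 - 2 * (5/3)) * γ

def Bval : ℝ := 2 * 4 - 1 - 5/3

def c1 (γ : ℝ) : ℝ := 2 * epsP γ

def c2 : ℝ := -1

def c3 (γ : ℝ) : ℝ := 2 * epsP γ * ((4 - 1 - 2 * (5/3)) * γ - 2)

def c4 (γ : ℝ) : ℝ := (4 - 1) * epsP γ + Aval γ

def lamMinus (γ : ℝ) : ℝ :=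
  ((c1 γ + c4 γ) - Real.sqrt ((c1 γ + c4 γ) ^ 2 - 4 * (c1 γ * c4 γ - c2 * c3 γ))) / 2

def lamPlus (γ : ℝ) : ℝ :=
  ((c1 γ + c4 γ) + Real.sqrt ((c1 γ + c4 γ) ^ 2 - 4 * (c1 γ * c4 γ - c2 * c3 γ))) / 2

/-- `f` as a polynomial: `f(Y) = −ε − A·Y + B·Y²`. -/
def fPoly (γ : ℝ) : Polynomial ℝ := C (-epsP γ) + C (-Aval γ) * X + C Bval * X ^ 2

/-- `Δ_U(ξ, P(ξ))` as a polynomial, for `d = 4`. -/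
def DelUPoly (γ : ℝ) (P : Polynomial ℝ) : Polynomial ℝ :=
  2 * P * (P + fPoly γ + C 3 * X * (1 - X))

/-- `Δ_Y(ξ, P(ξ))` as a polynomial, for `d = 4`. -/
def DelYPoly (γ : ℝ) (P : Polynomial ℝ) : Polynomial ℝ :=
  (C 4 * X - 1) * P + (X - 1) * fPoly γ

/-- The truncation `T_m(ξ) = Σ_{i=0}^{m} U_i ξ^i`. -/
def Tpoly (U : ℕ → ℝ) (m : ℕ) : Polynomial ℝ :=
  ∑ i ∈ Finset.range (m + 1), C (U i) * X ^ i

/-- `f` as a formal power series. -/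
def fSeries (γ : ℝ) : PowerSeries ℝ :=
  PowerSeries.C (R := ℝ) (-epsP γ) + PowerSeries.C (R := ℝ) (-Aval γ) * PowerSeries.X
    + PowerSeries.C (R := ℝ) Bval * PowerSeries.X ^ 2

/-!
Write `T = T_{n-1}` and `R = U(ξ) - T`, so that `ξⁿ ∣ R` and `[ξⁿ]R = U_n`. Both `Δ_Y(ξ, ·)` and
`Δ_U(ξ, ·)` are polynomial in the second slot, so `Δ(ξ, U) - Δ(ξ, T)` is `R` times a series, and
the `n`-th coefficient of `R·G` is `U_n·G(0)`. With `G(0) = -1 = c₂` for `Δ_Y` and `G(0) = 2ε = c₁`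
for `Δ_U` this gives the last two identities (`T_n` in place of `U`), and isolates `U_n` in the
`n`-th coefficient of the ODE. There, `[ξ⁰]Δ_Y(ξ, T) = 0` and `[ξ¹]Δ_Y(ξ, T) = c₄ - U₁ = λ₋` leave
`(nλ₋ - c₁ - c₄ + λ₋)·U_n`, and `λ₋ + λ₊ = c₁ + c₄`.
-/

theorem _root_.PowerSeries.coeff_mul_of_X_pow_dvd {R : Type*} [CommSemiring R] {n : ℕ}
    {φ : PowerSeries R} (hφ : PowerSeries.X ^ n ∣ φ) (ψ : PowerSeries R) :
    PowerSeries.coeff n (φ * ψ) = PowerSeries.coeff n φ * PowerSeries.coeff 0 ψ := by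
  obtain ⟨χ, rfl⟩ := hφ
  simp only [mul_assoc, PowerSeries.coeff_X_pow_mul', le_refl, if_true, Nat.sub_self,
    PowerSeries.coeff_zero_eq_constantCoeff_apply, map_mul]

theorem _root_.Finset.sum_range_succ_eq_add_add_sum_Icc {M : Type*} [AddCommMonoid M]
    (g : ℕ → M) {n : ℕ} (hn : 1 ≤ n) :
    ∑ i ∈ Finset.range (n + 1), g i = g 0 + g 1 + ∑ i ∈ Finset.Icc 2 n, g i := by
  rw [← Finset.sum_range_add_sum_Ico g (show 2 ≤ n + 1 by omega), Finset.sum_range_succ,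
    Finset.sum_range_one, Finset.Ico_add_one_right_eq_Icc]

def DelYSeries (γ : ℝ) (F : PowerSeries ℝ) : PowerSeries ℝ :=
  (PowerSeries.C (R := ℝ) 4 * PowerSeries.X - 1) * F + (PowerSeries.X - 1) * fSeries γ

def DelUSeries (γ : ℝ) (F : PowerSeries ℝ) : PowerSeries ℝ :=
  2 * F * (F + fSeries γ + PowerSeries.C (R := ℝ) 3 * PowerSeries.X * (1 - PowerSeries.X))

theorem coe_fPoly (γ : ℝ) : (fPoly γ : PowerSeries ℝ) = fSeries γ := by
  simp [fPoly, fSeries]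

theorem coe_DelYPoly (γ : ℝ) (P : Polynomial ℝ) :
    (DelYPoly γ P : PowerSeries ℝ) = DelYSeries γ P := by
  simp [DelYPoly, DelYSeries, coe_fPoly]

theorem coe_DelUPoly (γ : ℝ) (P : Polynomial ℝ) :
    (DelUPoly γ P : PowerSeries ℝ) = DelUSeries γ P := by
  have coe_two : ((2 : Polynomial ℝ) : PowerSeries ℝ) = 2 :=
    map_ofNat Polynomial.coeToPowerSeries.ringHom 2
  simp [DelUPoly, DelUSeries, coe_fPoly, coe_two]

theorem DelYSeries_sub (γ : ℝ) (F G : PowerSeries ℝ) :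
    DelYSeries γ F - DelYSeries γ G
      = (F - G) * (PowerSeries.C (R := ℝ) 4 * PowerSeries.X - 1) := by
  rw [DelYSeries, DelYSeries]; ring

theorem DelUSeries_sub (γ : ℝ) (F G : PowerSeries ℝ) :
    DelUSeries γ F - DelUSeries γ G = (F - G) * (2 * (F + G + fSeries γ
      + PowerSeries.C (R := ℝ) 3 * PowerSeries.X * (1 - PowerSeries.X))) := by
  rw [DelUSeries, DelUSeries]; ring

theorem coeff_DelYSeries_of_X_pow_dvd (γ : ℝ) {n : ℕ} {F G : PowerSeries ℝ}
    (h : PowerSeries.X ^ n ∣ F - G) :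
    PowerSeries.coeff n (DelYSeries γ F)
      = PowerSeries.coeff n (DelYSeries γ G) + c2 * PowerSeries.coeff n (F - G) := by
  have hdiff := congrArg (PowerSeries.coeff n) (DelYSeries_sub γ F G)
  have hfactor : PowerSeries.coeff 0 (PowerSeries.C (R := ℝ) 4 * PowerSeries.X - 1) = c2 := by
    simp [c2]
  rw [map_sub, PowerSeries.coeff_mul_of_X_pow_dvd h, hfactor] at hdiff
  linear_combination hdiff

theorem coeff_DelUSeries_of_X_pow_dvd (γ : ℝ) {n : ℕ} {F G : PowerSeries ℝ}
    (h : PowerSeries.X ^ n ∣ F - G) (hF : PowerSeries.coeff 0 F = epsP γ)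
    (hG : PowerSeries.coeff 0 G = epsP γ) :
    PowerSeries.coeff n (DelUSeries γ F)
      = PowerSeries.coeff n (DelUSeries γ G) + c1 γ * PowerSeries.coeff n (F - G) := by
  have hdiff := congrArg (PowerSeries.coeff n) (DelUSeries_sub γ F G)
  have hfactor : PowerSeries.coeff 0 (2 * (F + G + fSeries γ
      + PowerSeries.C (R := ℝ) 3 * PowerSeries.X * (1 - PowerSeries.X))) = c1 γ := by
    rw [PowerSeries.coeff_zero_eq_constantCoeff_apply] at hF hG ⊢
    simp [fSeries, hF, hG, map_ofNat, c1]
  rw [map_sub, PowerSeries.coeff_mul_of_X_pow_dvd h, hfactor] at hdiff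
  linear_combination hdiff

section Truncation

variable {U : ℕ → ℝ} {m : ℕ}

theorem coeff_Tpoly (i : ℕ) : (Tpoly U m).coeff i = if i ≤ m then U i else 0 := by
  simp [Tpoly, Polynomial.coeff_X_pow]

theorem coeff_coe_Tpoly_of_le {i : ℕ} (hi : i ≤ m) :
    PowerSeries.coeff i (Tpoly U m : PowerSeries ℝ) = U i := by
  rw [Polynomial.coeff_coe, coeff_Tpoly, if_pos hi]

variable {F : PowerSeries ℝ}

theorem X_pow_dvd_sub_Tpoly (hF : ∀ i ≤ m, PowerSeries.coeff i F = U i) :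
    PowerSeries.X ^ (m + 1) ∣ F - (Tpoly U m : PowerSeries ℝ) := by
  refine PowerSeries.X_pow_dvd_iff.2 fun i hi => ?_
  rw [map_sub, Polynomial.coeff_coe, coeff_Tpoly, if_pos (by omega), hF i (by omega), sub_self]

theorem coeff_sub_Tpoly (hF : PowerSeries.coeff (m + 1) F = U (m + 1)) :
    PowerSeries.coeff (m + 1) (F - (Tpoly U m : PowerSeries ℝ)) = U (m + 1) := by
  rw [map_sub, Polynomial.coeff_coe, coeff_Tpoly, if_neg (by omega), hF, sub_zero]

end Truncation

theorem coeff_DelYPoly_Tpoly_succ (γ : ℝ) (U : ℕ → ℝ) (m : ℕ) :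
    (DelYPoly γ (Tpoly U (m + 1))).coeff (m + 1)
      = (DelYPoly γ (Tpoly U m)).coeff (m + 1) + c2 * U (m + 1) := by
  have hT : ∀ i ≤ m, PowerSeries.coeff i (Tpoly U (m + 1) : PowerSeries ℝ) = U i :=
    fun i hi => coeff_coe_Tpoly_of_le (by omega)
  rw [← Polynomial.coeff_coe, ← Polynomial.coeff_coe, coe_DelYPoly, coe_DelYPoly,
    coeff_DelYSeries_of_X_pow_dvd γ (X_pow_dvd_sub_Tpoly hT),
    coeff_sub_Tpoly (coeff_coe_Tpoly_of_le le_rfl)]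

theorem coeff_DelUPoly_Tpoly_succ (γ : ℝ) {U : ℕ → ℝ} (h0 : U 0 = epsP γ) (m : ℕ) :
    (DelUPoly γ (Tpoly U (m + 1))).coeff (m + 1)
      = (DelUPoly γ (Tpoly U m)).coeff (m + 1) + c1 γ * U (m + 1) := by
  have hT : ∀ i ≤ m, PowerSeries.coeff i (Tpoly U (m + 1) : PowerSeries ℝ) = U i :=
    fun i hi => coeff_coe_Tpoly_of_le (by omega)
  have hT0 : ∀ k, PowerSeries.coeff 0 (Tpoly U k : PowerSeries ℝ) = epsP γ := fun k => by
    rw [coeff_coe_Tpoly_of_le (Nat.zero_le k), h0]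
  rw [← Polynomial.coeff_coe, ← Polynomial.coeff_coe, coe_DelUPoly, coe_DelUPoly,
    coeff_DelUSeries_of_X_pow_dvd γ (X_pow_dvd_sub_Tpoly hT) (hT0 _) (hT0 _),
    coeff_sub_Tpoly (coeff_coe_Tpoly_of_le le_rfl)]

theorem coeff_DelYPoly_zero (γ : ℝ) (P : Polynomial ℝ) :
    (DelYPoly γ P).coeff 0 = epsP γ - P.coeff 0 := by
  simp [DelYPoly, fPoly, Polynomial.mul_coeff_zero]
  ring

theorem coeff_DelYPoly_one (γ : ℝ) (P : Polynomial ℝ) :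
    (DelYPoly γ P).coeff 1 = 4 * P.coeff 0 - P.coeff 1 + Aval γ - epsP γ := by
  simp [DelYPoly, fPoly, sub_mul, mul_add, mul_assoc, Polynomial.coeff_X_mul]
  ring

theorem coeff_coe_mul_mk_derivative (p : Polynomial ℝ) (U : ℕ → ℝ) {n : ℕ} (hn : 1 ≤ n) :
    PowerSeries.coeff n
        ((p : PowerSeries ℝ) * PowerSeries.mk fun k => ((k : ℝ) + 1) * U (k + 1))
      = p.coeff 0 * ((n : ℝ) + 1) * U (n + 1) + p.coeff 1 * n * U n
        + ∑ i ∈ Finset.Icc 2 n, ((n : ℝ) + 1 - i) * U (n + 1 - i) * p.coeff i := by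
  rw [PowerSeries.coeff_mul, Finset.Nat.sum_antidiagonal_eq_sum_range_succ_mk,
    Finset.sum_range_succ_eq_add_add_sum_Icc _ hn]
  simp only [Polynomial.coeff_coe, PowerSeries.coeff_mk]
  have hterm : ∀ i ∈ Finset.Icc 2 n, p.coeff i * ((((n - i : ℕ) : ℝ) + 1) * U (n - i + 1))
      = ((n : ℝ) + 1 - i) * U (n + 1 - i) * p.coeff i := by
    intro i hi
    have hin : i ≤ n := (Finset.mem_Icc.1 hi).2
    rw [Nat.cast_sub hin, Nat.sub_add_comm hin]
    ring
  rw [Finset.sum_congr rfl hterm, Nat.sub_zero, Nat.sub_add_cancel hn, Nat.cast_sub hn]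
  push_cast
  ring

theorem lamMinus_add_lamPlus (γ : ℝ) : lamMinus γ + lamPlus γ = c1 γ + c4 γ := by
  rw [lamMinus, lamPlus]; ring

theorem mul_lamMinus_sub_lamPlus_mul_eq (γ : ℝ) {U : ℕ → ℝ} {m : ℕ} (hm : 1 ≤ m)
    (h0 : U 0 = epsP γ) (h1 : U 1 = (lamMinus γ - c4 γ) / c2)
    (hODE : DelYSeries γ (PowerSeries.mk U)
        * PowerSeries.mk (fun k => ((k : ℝ) + 1) * U (k + 1))
      = DelUSeries γ (PowerSeries.mk U)) :
    (((m + 1 : ℕ) : ℝ) * lamMinus γ - lamPlus γ) * U (m + 1)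
      = (DelUPoly γ (Tpoly U m)).coeff (m + 1)
        - ∑ i ∈ Finset.Icc 2 (m + 1), (((m + 1 : ℕ) : ℝ) + 1 - i) * U (m + 1 + 1 - i)
            * (DelYPoly γ (Tpoly U m)).coeff i := by
  set T : PowerSeries ℝ := (Tpoly U m : PowerSeries ℝ)
  have hdvd : PowerSeries.X ^ (m + 1) ∣ PowerSeries.mk U - T :=
    X_pow_dvd_sub_Tpoly fun i _ => PowerSeries.coeff_mk _ _
  have hT0 : PowerSeries.coeff 0 T = epsP γ := by rw [coeff_coe_Tpoly_of_le (Nat.zero_le _), h0]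
  have hU1 : U 1 = c4 γ - lamMinus γ := by rw [h1, c2]; ring
  have hV0 : PowerSeries.coeff 0 ((PowerSeries.C (R := ℝ) 4 * PowerSeries.X - 1)
      * PowerSeries.mk fun k => ((k : ℝ) + 1) * U (k + 1)) = -U 1 := by
    simp [PowerSeries.coeff_zero_eq_constantCoeff_apply]
  have hP0 : (DelYPoly γ (Tpoly U m)).coeff 0 = 0 := by
    rw [coeff_DelYPoly_zero, coeff_Tpoly, if_pos (Nat.zero_le _), h0, sub_self]
  have hP1 : (DelYPoly γ (Tpoly U m)).coeff 1 = lamMinus γ := by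
    rw [coeff_DelYPoly_one, coeff_Tpoly, coeff_Tpoly, if_pos (Nat.zero_le _), if_pos hm, h0, hU1,
      c4]
    ring
  have hc := congrArg (PowerSeries.coeff (m + 1)) hODE
  rw [← sub_add_cancel (DelYSeries γ (PowerSeries.mk U)) (DelYSeries γ T), DelYSeries_sub,
    add_mul, map_add, mul_assoc, PowerSeries.coeff_mul_of_X_pow_dvd hdvd, hV0, ← coe_DelYPoly,
    coeff_coe_mul_mk_derivative _ _ (by omega), hP0, hP1,
    coeff_DelUSeries_of_X_pow_dvd γ hdvd (by rw [PowerSeries.coeff_mk, h0]) hT0,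
    ← coe_DelUPoly, Polynomial.coeff_coe, coeff_sub_Tpoly (PowerSeries.coeff_mk _ _)] at hc
  linear_combination hc + U (m + 1) * hU1 - U (m + 1) * lamMinus_add_lamPlus γ

theorem coeff_recursion_general (γ : ℝ)
    (U : ℕ → ℝ)
    (h0 : U 0 = epsP γ)
    (h1 : U 1 = (lamMinus γ - c4 γ) / c2)
    (hODE :
      ((PowerSeries.C (R := ℝ) 4 * PowerSeries.X - 1) * PowerSeries.mk U
          + (PowerSeries.X - 1) * fSeries γ)
        * PowerSeries.mk (fun n => ((n : ℝ) + 1) * U (n + 1))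
      = 2 * PowerSeries.mk U
          * (PowerSeries.mk U + fSeries γ
              + PowerSeries.C (R := ℝ) 3 * PowerSeries.X * (1 - PowerSeries.X))) :
    ∀ n : ℕ, 2 ≤ n →
      (((n : ℝ) * lamMinus γ - lamPlus γ) * U n
          = (DelUPoly γ (Tpoly U (n - 1))).coeff n
            - ∑ i ∈ Finset.Icc 2 n,
                ((n : ℝ) + 1 - (i : ℝ)) * U (n + 1 - i)
                  * (DelYPoly γ (Tpoly U (n - 1))).coeff i) ∧
      (DelUPoly γ (Tpoly U n)).coeff n
        = (DelUPoly γ (Tpoly U (n - 1))).coeff n + c1 γ * U n ∧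
      (DelYPoly γ (Tpoly U n)).coeff n
        = (DelYPoly γ (Tpoly U (n - 1))).coeff n + c2 * U n := by
  intro n hn
  obtain ⟨m, rfl⟩ : ∃ m, n = m + 1 := ⟨n - 1, by omega⟩
  rw [Nat.add_sub_cancel]
  exact ⟨mul_lamMinus_sub_lamPlus_mul_eq γ (by omega) h0 h1 hODE,
    coeff_DelUPoly_Tpoly_succ γ h0 m, coeff_DelYPoly_Tpoly_succ γ U m⟩

/-- Recursive formula for the power-series coefficients at the sonic point. -/
theorem coeff_recursion (γ : ℝ) (hγ : (Real.sqrt (5/3))⁻¹ < γ)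
    (U : ℕ → ℝ)
    (h0 : U 0 = epsP γ)
    (h1 : U 1 = (lamMinus γ - c4 γ) / c2)
    (hODE :
      ((PowerSeries.C (R := ℝ) 4 * PowerSeries.X - 1) * PowerSeries.mk U
          + (PowerSeries.X - 1) * fSeries γ)
        * PowerSeries.mk (fun n => ((n : ℝ) + 1) * U (n + 1))
      = 2 * PowerSeries.mk U
          * (PowerSeries.mk U + fSeries γ
              + PowerSeries.C (R := ℝ) 3 * PowerSeries.X * (1 - PowerSeries.X))) :
    ∀ n : ℕ, 2 ≤ n →
      (((n : ℝ) * lamMinus γ - lamPlus γ) * U n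
          = (DelUPoly γ (Tpoly U (n - 1))).coeff n
            - ∑ i ∈ Finset.Icc 2 n,
                ((n : ℝ) + 1 - (i : ℝ)) * U (n + 1 - i)
                  * (DelYPoly γ (Tpoly U (n - 1))).coeff i) ∧
      (DelUPoly γ (Tpoly U n)).coeff n
        = (DelUPoly γ (Tpoly U (n - 1))).coeff n + c1 γ * U n ∧
      (DelYPoly γ (Tpoly U n)).coeff n
        = (DelYPoly γ (Tpoly U (n - 1))).coeff n + c2 * U n :=
  coeff_recursion_general γ U h0 h1 hODE

end Stmt7
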